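/- For a prime power p^v, a modulus q with p | q, and a divisor q* of q, the sum over primitive Dirichlet characters χ* modulo q* of χ*(p^v) equals the sum over divisors d of gcd(p^v - 1, q*) of φ(d)·μ(q*/d) when p does not divide q*, and equals 0 when p divides q* and q* > 1. -/

import Mathlib

/-!
Every Dirichlet character mod `m` of conductor `d` is induced by a unique primitive character
mod `d`, and inducing does not change values at integers coprime to `m`. Hence, for `a` coprime
to `m`, the orthogonality sums `∑_{χ mod m} χ(a) = [a ≡ 1 mod m] φ(m)` are the divisor sums
of the primitive sums, and Möbius inversion (over the divisor-closed set of moduli coprime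
to `a`) recovers the primitive sum. When `p ∣ q*`, `p^v` is not a unit mod `q*`, so every
term vanishes.
-/

open Finset DirichletCharacter

theorem HasEnoughRootsOfUnity.exponent_units_zmod_of_dvd (M : Type*) [CommMonoid M] {d m : ℕ}
    [NeZero m] (hdm : d ∣ m) [HasEnoughRootsOfUnity M (Monoid.exponent (ZMod m)ˣ)] :
    HasEnoughRootsOfUnity M (Monoid.exponent (ZMod d)ˣ) :=
  have : NeZero (Monoid.exponent (ZMod m)ˣ) := ⟨Monoid.exponent_ne_zero_of_finite⟩
  have : NeZero d := ⟨ne_zero_of_dvd_ne_zero (NeZero.ne m) hdm⟩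
  of_dvd M <| by
    simpa only [ArithmeticFunction.carmichael_eq_exponent'] using
      ArithmeticFunction.carmichael_dvd hdm

theorem Int.divisors_gcd_sub_one_eq_filter {a : ℤ} {m : ℕ} (hm : m ≠ 0) :
    (Int.gcd (a - 1) m).divisors = m.divisors.filter (fun d => (a : ZMod d) = 1) := by
  ext d
  rw [Nat.mem_divisors, ← Int.natCast_dvd_natCast, Int.dvd_coe_gcd_iff, mem_filter,
    Nat.mem_divisors, Int.natCast_dvd_natCast, ← ZMod.intCast_zmod_eq_zero_iff_dvd, Int.cast_sub,
    Int.cast_one, sub_eq_zero]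
  have : (a - 1).gcd m ≠ 0 := Int.gcd_ne_zero_right (Int.natCast_ne_zero.mpr hm)
  tauto

namespace DirichletCharacter

variable {R : Type*} [CommRing R] [IsDomain R]

open Classical in
theorem sum_divisors_sum_isPrimitive_apply {m : ℕ} [NeZero m] {a : ℤ} (ha : IsCoprime a m) :
    ∑ d ∈ m.divisors,
        ∑ χ ∈ univ.filter (fun χ : DirichletCharacter R d => χ.IsPrimitive), χ a =
      ∑ χ : DirichletCharacter R m, χ a := by
  rw [← sum_fiberwise_of_maps_to (g := conductor) fun χ _ =>
    Nat.mem_divisors.mpr ⟨χ.conductor_dvd_level, NeZero.ne m⟩]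
  refine sum_congr rfl fun d hd => ?_
  have hdm : d ∣ m := Nat.dvd_of_mem_divisors hd
  refine sum_bij (fun ψ _ => changeLevel hdm ψ) ?_ (fun _ _ _ _ h => changeLevel_injective hdm h)
    ?_ fun ψ _ => (changeLevel_eq_cast_of_dvd' ψ hdm ha).symm
  · intro ψ hψ
    rw [mem_filter_univ, isPrimitive_def] at hψ
    rwa [mem_filter_univ, conductor_changeLevel]
  · intro χ hχ
    rw [mem_filter_univ] at hχ
    obtain ⟨_, ψ, rfl⟩ : χ.FactorsThrough d := hχ ▸ χ.factorsThrough_conductor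
    refine ⟨ψ, ?_, rfl⟩
    rwa [mem_filter_univ, isPrimitive_def, ← conductor_changeLevel ψ hdm]

open Classical ArithmeticFunction in
theorem sum_isPrimitive_apply_eq_sum_moebius {m : ℕ} [NeZero m]
    [HasEnoughRootsOfUnity R (Monoid.exponent (ZMod m)ˣ)] {a : ℤ} (ha : IsCoprime a m) :
    ∑ χ ∈ univ.filter (fun χ : DirichletCharacter R m => χ.IsPrimitive), χ a =
      ((∑ d ∈ (Int.gcd (a - 1) m).divisors,
        (d.totient : ℤ) * moebius (m / d) : ℤ) : R) := by
  have hclosed : ∀ k n : ℕ, k ∣ n → IsCoprime a n → IsCoprime a k := fun _ _ hkn hn =>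
    hn.of_isCoprime_of_dvd_right (Int.natCast_dvd_natCast.mpr hkn)
  have hinv := (sum_eq_iff_sum_mul_moebius_eq_on {n | IsCoprime a n} hclosed).mp
    (fun n hn hns => have : NeZero n := .of_pos hn
      sum_divisors_sum_isPrimitive_apply (R := R) hns) m (NeZero.pos m) ha
  rw [← hinv, Nat.sum_divisorsAntidiagonal'
      (f := fun k n => (moebius k : R) * ∑ χ : DirichletCharacter R n, χ a),
    Int.divisors_gcd_sub_one_eq_filter (NeZero.ne m), sum_filter]
  push_cast
  refine sum_congr rfl fun d hd => ?_
  have : NeZero d := .of_pos (Nat.pos_of_mem_divisors hd)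
  have := HasEnoughRootsOfUnity.exponent_units_zmod_of_dvd R (Nat.dvd_of_mem_divisors hd)
  rw [sum_characters_eq]
  split_ifs <;> ring

end DirichletCharacter

open Classical in
theorem stmt0_general (p v qs : ℕ) (hp : p.Prime) (hv : 1 ≤ v) :
    (¬ p ∣ qs →
      ∑ χ ∈ Finset.univ.filter (fun χ : DirichletCharacter ℂ qs => χ.IsPrimitive),
        χ ((p : ZMod qs) ^ v) =
      ((∑ d ∈ (Nat.gcd (p ^ v - 1) qs).divisors,
        (Nat.totient d : ℤ) * ArithmeticFunction.moebius (qs / d) : ℤ) : ℂ)) ∧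
    (p ∣ qs → 1 < qs →
      ∑ χ ∈ Finset.univ.filter (fun χ : DirichletCharacter ℂ qs => χ.IsPrimitive),
        χ ((p : ZMod qs) ^ v) = 0) := by
  refine ⟨fun hpqs => ?_, fun hpqs _ => ?_⟩
  · have : NeZero qs := ⟨by rintro rfl; exact hpqs (dvd_zero p)⟩
    have hcop : IsCoprime ((p ^ v : ℕ) : ℤ) qs :=
      Nat.isCoprime_iff_coprime.mpr ((hp.coprime_iff_not_dvd.mpr hpqs).pow_left v)
    have hgcd : Int.gcd ((p ^ v : ℕ) - 1) qs = Nat.gcd (p ^ v - 1) qs := by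
      rw [← Int.gcd_natCast_natCast, Nat.cast_sub (Nat.one_le_pow _ _ hp.pos), Nat.cast_one]
    rw [← hgcd]
    exact_mod_cast sum_isPrimitive_apply_eq_sum_moebius hcop
  · have hnu : ¬IsUnit ((p : ZMod qs) ^ v) := by
      rwa [isUnit_pow_iff (by omega), ZMod.isUnit_iff_coprime, hp.coprime_iff_not_dvd, not_not]
    exact sum_eq_zero fun χ _ => χ.map_nonunit hnu

open Classical in
/-- For a prime power `p^v`, a modulus `q` with `p ∣ q`, and a divisor `q*` of `q`,
the sum over primitive Dirichlet characters `χ*` mod `q*` of `χ*(p^v)` equals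
`∑_{d ∣ gcd(p^v - 1, q*)} φ(d) μ(q*/d)` when `p ∤ q*`, and equals `0` when
`p ∣ q*` and `q* > 1`. -/
theorem stmt0 (p v q qs : ℕ) (hp : p.Prime) (hv : 1 ≤ v) (hq : 0 < q)
    (hpq : p ∣ q) (hqs : qs ∣ q) :
    (¬ p ∣ qs →
      ∑ χ ∈ Finset.univ.filter (fun χ : DirichletCharacter ℂ qs => χ.IsPrimitive),
        χ ((p : ZMod qs) ^ v) =
      ((∑ d ∈ (Nat.gcd (p ^ v - 1) qs).divisors,
        (Nat.totient d : ℤ) * ArithmeticFunction.moebius (qs / d) : ℤ) : ℂ)) ∧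
    (p ∣ qs → 1 < qs →
      ∑ χ ∈ Finset.univ.filter (fun χ : DirichletCharacter ℂ qs => χ.IsPrimitive),
        χ ((p : ZMod qs) ^ v) = 0) :=
  stmt0_general p v qs hp hv
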